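/- arXiv:1810.05143 — 6 statements merged into one kernel-verified Lean document; each statement's English description precedes it below -/
import Mathlib

section
/- Every finite simple undirected graph on n ≥ 2 vertices with minimum degree at least 3 contains a cycle of length at most 2·log₂ n. -/
/-!
Let `k = ⌊log₂ n⌋` and suppose every cycle is longer than `2k`. Then two distinct paths with
the same endpoints and total length at most `2k` cannot exist, as together they would contain
such a cycle. Hence, around any vertex `u`, the vertices reached by a path of length `i ≤ k`
form disjoint levels of a tree in which `u` has at least three children and every other vertex
at least two. Levels `k - 1` and `k` then contain `3 · 2^(k-2) + 3 · 2^(k-1) > 2^(k+1) > n`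
vertices.
-/

open Finset

namespace SimpleGraph

variable {V : Type*} {G : SimpleGraph V} {u v w : V}

namespace Walk

theorem IsPath.egirth_le_length_add_length {p q : G.Walk u v} (hp : p.IsPath) (hq : q.IsPath)
    (hne : p ≠ q) : G.egirth ≤ p.length + q.length := by
  let H : SimpleGraph V := fromEdgeSet {e | e ∈ p.edges ∨ e ∈ q.edges}
  have hHG : H ≤ G := by
    rw [fromEdgeSet_le]
    rintro e ⟨he | he, -⟩
    exacts [p.edges_subset_edgeSet he, q.edges_subset_edgeSet he]
  have hpH : ∀ e ∈ p.edges, e ∈ H.edgeSet := fun e he => by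
    rw [edgeSet_fromEdgeSet]
    exact ⟨Or.inl he, G.not_isDiag_of_mem_edgeSet (p.edges_subset_edgeSet he)⟩
  have hqH : ∀ e ∈ q.edges, e ∈ H.edgeSet := fun e he => by
    rw [edgeSet_fromEdgeSet]
    exact ⟨Or.inr he, G.not_isDiag_of_mem_edgeSet (q.edges_subset_edgeSet he)⟩
  have hH : ¬ H.IsAcyclic := fun hH => hne <| ext_support <| by
    have := (isAcyclic_iff_subsingleton_path.mp hH u v).elim
      ⟨_, hp.transfer hpH⟩ ⟨_, hq.transfer hqH⟩
    simpa using congrArg (fun r : H.Path u v => (r : H.Walk u v).support) this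
  obtain ⟨x, c, hc, -⟩ := exists_egirth_eq_length.mpr hH
  have hcpq : c.edges ⊆ p.edges ++ q.edges := fun e he => by
    have := c.edges_subset_edgeSet he
    rw [edgeSet_fromEdgeSet] at this
    simpa using this.1
  -- `c` uses each edge of `p` and `q` at most once
  have hlen : c.length ≤ p.length + q.length := by
    simpa using (List.subperm_of_subset hc.edges_nodup hcpq).length_le
  calc G.egirth ≤ H.egirth := egirth_anti hHG
    _ ≤ c.length := egirth_le_length hc
    _ ≤ p.length + q.length := by exact_mod_cast hlen

theorem IsPath.eq_of_length_add_length_lt_egirth {p q : G.Walk u v} (hp : p.IsPath)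
    (hq : q.IsPath) (h : p.length + q.length < G.egirth) : p = q := by
  by_contra hne
  exact (hp.egirth_le_length_add_length hq hne).not_gt h

theorem IsPath.eq_penultimate_of_adj_of_length_lt_egirth {p : G.Walk u v} (hp : p.IsPath)
    (hadj : G.Adj v w) (hw : w ∈ p.support) (h : p.length + 1 < G.egirth) :
    w = p.penultimate := by
  classical
  have hd : p.dropUntil w hw = (Path.singleton hadj.symm : G.Walk w v) := by
    refine (hp.dropUntil hw).eq_of_length_add_length_lt_egirth (Path.singleton hadj.symm).2
      (lt_of_le_of_lt ?_ h)
    simpa using p.length_dropUntil_le_length hw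
  conv_rhs =>
    rw [← p.take_spec hw, hd, Path.singleton_coe, ← concat_eq_append, penultimate_concat]

theorem IsPath.degree_le_card_neighborFinset_sdiff_support_add_one [Fintype V] [DecidableEq V]
    [DecidableRel G.Adj] {p : G.Walk u v} (hp : p.IsPath) (h : p.length + 1 < G.egirth) :
    G.degree v ≤ #(G.neighborFinset v \ p.support.toFinset) + 1 := by
  have hinter : G.neighborFinset v ∩ p.support.toFinset ⊆ {p.penultimate} := fun w hw => by
    rw [mem_inter, mem_neighborFinset, List.mem_toFinset] at hw
    exact mem_singleton.mpr (hp.eq_penultimate_of_adj_of_length_lt_egirth hw.1 hw.2 h)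
  rw [← card_neighborFinset_eq_degree, ← card_sdiff_add_card_inter _ p.support.toFinset]
  grw [card_le_card hinter, card_singleton]

end Walk

section PathLevel

variable [Fintype V]

variable (G) in
open Classical in
noncomputable def pathLevel (u : V) (i : ℕ) : Finset V :=
  {v | ∃ p : G.Walk u v, p.IsPath ∧ p.length = i}

theorem mem_pathLevel {i : ℕ} :
    v ∈ G.pathLevel u i ↔ ∃ p : G.Walk u v, p.IsPath ∧ p.length = i := by
  simp [pathLevel]

theorem disjoint_pathLevel {i j : ℕ} (hij : i ≠ j) (h : i + j < G.egirth) :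
    Disjoint (G.pathLevel u i) (G.pathLevel u j) := by
  refine Finset.disjoint_left.mpr fun v hi hj => ?_
  obtain ⟨p, hp, rfl⟩ := mem_pathLevel.mp hi
  obtain ⟨q, hq, rfl⟩ := mem_pathLevel.mp hj
  exact hij (congrArg Walk.length (hp.eq_of_length_add_length_lt_egirth hq (by exact_mod_cast h)))

variable [DecidableRel G.Adj] {d : ℕ}

theorem card_pathLevel_mul_le_card_pathLevel_succ (hdeg : ∀ v, d ≤ G.degree v) {i : ℕ}
    (hi : 2 * (i + 1) < G.egirth) :
    #(G.pathLevel u i) * (d - 1) ≤ #(G.pathLevel u (i + 1)) := by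
  classical
  -- double count the edges between consecutive levels of the tree, `w` being the parent of `x`
  let r : V → V → Prop := fun w x =>
    ∃ p : G.Walk u x, p.IsPath ∧ p.length = i + 1 ∧ p.penultimate = w
  have hi' : (i + 1 : ℕ∞) < G.egirth := lt_of_le_of_lt (by norm_cast; omega) hi
  have habove : ∀ w ∈ G.pathLevel u i,
      d - 1 ≤ #((G.pathLevel u (i + 1)).bipartiteAbove r w) := by
    intro w hw
    obtain ⟨q, hq, rfl⟩ := mem_pathLevel.mp hw
    have hsub : G.neighborFinset w \ q.support.toFinset ⊆
        (G.pathLevel u (q.length + 1)).bipartiteAbove r w := by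
      intro x hx
      rw [mem_sdiff, mem_neighborFinset, List.mem_toFinset] at hx
      have hqx := hq.concat hx.2 hx.1
      exact mem_filter.mpr ⟨mem_pathLevel.mpr ⟨_, hqx, by simp⟩, _, hqx, by simp, by simp⟩
    have := hq.degree_le_card_neighborFinset_sdiff_support_add_one hi'
    grw [← card_le_card hsub]
    have := hdeg w
    omega
  have hbelow : ∀ x ∈ G.pathLevel u (i + 1),
      #((G.pathLevel u i).bipartiteBelow r x) ≤ 1 := by
    refine fun x hx => card_le_one.mpr fun w hw w' hw' => ?_
    obtain ⟨p, hp, hpl, rfl⟩ := (mem_filter.mp hw).2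
    obtain ⟨p', hp', hpl', rfl⟩ := (mem_filter.mp hw').2
    rw [hp.eq_of_length_add_length_lt_egirth hp'
      (by rw [hpl, hpl']; convert hi using 1; push_cast; ring)]
  simpa using card_mul_le_card_mul r habove hbelow

theorem mul_pow_le_card_pathLevel_succ (hdeg : ∀ v, d ≤ G.degree v) {i : ℕ}
    (hi : 2 * (i + 1) < G.egirth) : d * (d - 1) ^ i ≤ #(G.pathLevel u (i + 1)) := by
  induction i with
  | zero =>
    have hsub : G.neighborFinset u ⊆ G.pathLevel u 1 := fun v hv =>
      mem_pathLevel.mpr ⟨_, (Path.singleton ((G.mem_neighborFinset u v).mp hv)).2, rfl⟩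
    simpa [card_neighborFinset_eq_degree] using (hdeg u).trans (card_le_card hsub)
  | succ i ih =>
    calc d * (d - 1) ^ (i + 1) = d * (d - 1) ^ i * (d - 1) := by ring
      _ ≤ #(G.pathLevel u (i + 1)) * (d - 1) := by
        gcongr
        exact ih (lt_of_le_of_lt (by gcongr; exact le_self_add) hi)
      _ ≤ #(G.pathLevel u (i + 1 + 1)) := card_pathLevel_mul_le_card_pathLevel_succ hdeg hi

theorem egirth_le_two_mul_log_card [Nonempty V] (hdeg : ∀ v, 3 ≤ G.degree v) :
    G.egirth ≤ 2 * Nat.log 2 (Fintype.card V) := by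
  classical
  obtain ⟨u⟩ := ‹Nonempty V›
  have hk : 2 ≤ Nat.log 2 (Fintype.card V) :=
    Nat.le_log_of_pow_le (by norm_num) (by linarith [hdeg u, G.degree_lt_card_verts u])
  obtain ⟨m, hm⟩ : ∃ m, Nat.log 2 (Fintype.card V) = m + 2 := ⟨_, (Nat.sub_add_cancel hk).symm⟩
  by_contra! hg
  rw [hm] at hg
  have hlt : ∀ j ≤ 2 * (m + 2), (j : ℕ∞) < G.egirth := fun j hj =>
    lt_of_le_of_lt (by exact_mod_cast hj) hg
  have h₁ : 3 * 2 ^ m ≤ #(G.pathLevel u (m + 1)) := by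
    simpa using
      mul_pow_le_card_pathLevel_succ hdeg (by exact_mod_cast hlt (2 * (m + 1)) (by omega))
  have h₂ : 3 * 2 ^ (m + 1) ≤ #(G.pathLevel u (m + 2)) := by
    simpa using mul_pow_le_card_pathLevel_succ hdeg (by exact_mod_cast hlt (2 * (m + 2)) le_rfl)
  have hcard : #(G.pathLevel u (m + 1)) + #(G.pathLevel u (m + 2)) ≤ Fintype.card V := by
    have hdisj := disjoint_pathLevel (u := u) (by omega) (hlt (m + 1 + (m + 2)) (by omega))
    rw [← card_union_of_disjoint hdisj]
    exact card_le_univ _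
  have hn : Fintype.card V < 2 ^ (m + 2 + 1) := hm ▸ Nat.lt_pow_succ_log_self (by norm_num) _
  rw [pow_succ] at h₂
  rw [pow_succ, pow_succ, pow_succ] at hn
  omega

end PathLevel

end SimpleGraph

open SimpleGraph

theorem min_degree_three_short_cycle_general {V : Type*} [Fintype V]
    (G : SimpleGraph V) [DecidableRel G.Adj]
    (hn : 2 ≤ Fintype.card V)
    (hdeg : ∀ v : V, 3 ≤ G.degree v) :
    ∃ (v : V) (w : G.Walk v v), w.IsCycle ∧
      (w.length : ℝ) ≤ 2 * Real.logb 2 (Fintype.card V) := by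
  have : Nonempty V := Fintype.card_pos_iff.mp (by omega)
  have hg := egirth_le_two_mul_log_card hdeg
  have hcyc : ¬ G.IsAcyclic := fun h => by
    rw [h.egirth_eq_top, top_le_iff] at hg
    exact ENat.natCast_ne_top _ (by exact_mod_cast hg)
  obtain ⟨v, w, hw, hlen⟩ := exists_egirth_eq_length.mpr hcyc
  refine ⟨v, w, hw, ?_⟩
  have hwlen : w.length ≤ 2 * Nat.log 2 (Fintype.card V) := by exact_mod_cast hlen ▸ hg
  calc (w.length : ℝ) ≤ 2 * Nat.log 2 (Fintype.card V) := by exact_mod_cast hwlen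
    _ ≤ 2 * Real.logb 2 (Fintype.card V) := by gcongr; exact Real.natLog_le_logb _ _

/-- Every finite simple undirected graph on `n ≥ 2` vertices with minimum degree
at least 3 contains a cycle of length at most `2 · log₂ n`. -/
theorem min_degree_three_short_cycle {V : Type*} [Fintype V] [DecidableEq V]
    (G : SimpleGraph V) [DecidableRel G.Adj]
    (hn : 2 ≤ Fintype.card V)
    (hdeg : ∀ v : V, 3 ≤ G.degree v) :
    ∃ (v : V) (w : G.Walk v v), w.IsCycle ∧
      (w.length : ℝ) ≤ 2 * Real.logb 2 (Fintype.card V) :=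
  min_degree_three_short_cycle_general G hn hdeg
end

section
/- Every finite simple undirected graph on n vertices with strictly more than 2n edges contains a cycle of length at most 2·log₂ n. -/
/-!
Repeatedly deleting a vertex with at most two neighbours among the remaining ones removes at most
two edges per vertex, so with more than `2 n` edges it stops at a nonempty set `T` in which every
vertex has at least three neighbours. Suppose no cycle has length at most `2 (k + 1)`, and sort the
vertices of `T` into layers by their distance in `G` from a fixed `v ∈ T`. A vertex of layer `i ≤ k`
has no neighbour in its own layer, at most one in layer `i - 1`, and no neighbour in layer `i + 1`
in common with another vertex of layer `i`: in each case two geodesics would close a cycle of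
length at most `2 (k + 1)`. Hence layer `i ≥ 1` has at least `3 · 2 ^ (i - 1)` vertices, layers `k`
and `k + 1` together at least `2 ^ (k + 2)`, and the girth is at most `2 log₂ n`.
-/

open Finset

namespace SimpleGraph

variable {V : Type*} {G : SimpleGraph V}

lemma Walk.IsPath.eq_of_length_add_lt_egirth {u v : V} {p q : G.Walk u v}
    (hp : p.IsPath) (hq : q.IsPath) (h : ((p.length + q.length : ℕ) : ℕ∞) < G.egirth) :
    p = q := by
  by_contra hne
  obtain ⟨_, _, _, c, hc, hlen⟩ := hp.exists_isCycle_length_le_add_of_ne hq hne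
  exact (egirth_le_length hc |>.trans (by exact_mod_cast hlen)).not_gt h

lemma Walk.notMem_support_of_length_le_dist {v w u : V} (p : G.Walk v w)
    (h : p.length ≤ G.dist v u) (hu : u ≠ w) : u ∉ p.support := by
  classical
  exact fun hmem => (dist_le _ |>.trans_lt (p.length_takeUntil_lt_length hmem hu)).not_ge h

lemma Walk.IsPath.concat_of_length_le_dist {v w u : V} {p : G.Walk v w} (hp : p.IsPath)
    (h : G.Adj w u) (hlen : p.length ≤ G.dist v u) : (p.concat h).IsPath :=
  hp.concat (p.notMem_support_of_length_le_dist hlen h.ne') h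

lemma egirth_le_of_adj_of_dist_eq {v u w : V} {j : ℕ} (h : G.Adj w u) (hu : G.Reachable v u)
    (hdu : G.dist v u = j) (hdw : G.dist v w = j) : G.egirth ≤ 2 * j + 1 := by
  obtain ⟨p, hp, hpl⟩ := hu.exists_path_of_dist
  obtain ⟨q, hq, hql⟩ := (hu.trans h.symm.reachable).exists_path_of_dist
  have hq' : (q.concat h).IsPath := hq.concat_of_length_le_dist h (by omega)
  have hlen : p.length + (q.concat h).length = 2 * j + 1 := by rw [Walk.length_concat]; omega
  by_contra! hlt
  have := congrArg Walk.length <|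
    hp.eq_of_length_add_lt_egirth hq' (by rw [hlen]; exact_mod_cast hlt)
  rw [Walk.length_concat] at this
  omega

lemma eq_of_adj_of_adj_of_dist_eq_succ {v u w₁ w₂ : V} {j : ℕ} (h₁ : G.Adj w₁ u)
    (h₂ : G.Adj w₂ u) (hdu : G.dist v u = j + 1) (hd₁ : G.dist v w₁ = j)
    (hd₂ : G.dist v w₂ = j) (hg : 2 * (j + 1) < G.egirth) : w₁ = w₂ := by
  have hu : G.Reachable v u := Reachable.of_dist_ne_zero (by omega)
  obtain ⟨p₁, hp₁, hl₁⟩ := (hu.trans h₁.symm.reachable).exists_path_of_dist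
  obtain ⟨p₂, hp₂, hl₂⟩ := (hu.trans h₂.symm.reachable).exists_path_of_dist
  have hlen : (p₁.concat h₁).length + (p₂.concat h₂).length = 2 * (j + 1) := by
    simp only [Walk.length_concat]; omega
  have hpq := (hp₁.concat_of_length_le_dist h₁ (by omega)).eq_of_length_add_lt_egirth
    (hp₂.concat_of_length_le_dist h₂ (by omega)) (by rw [hlen]; exact_mod_cast hg)
  exact (Walk.concat_inj hpq).1

section Peeling

variable [DecidableEq V] [Fintype G.edgeSet] [DecidableRel G.Adj]

lemma card_edgeFinset_inter_sym2_le (S : Finset V) (a : V) :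
    #(G.edgeFinset ∩ S.sym2) ≤ #(G.edgeFinset ∩ (S.erase a).sym2) + #{b ∈ S | G.Adj a b} := by
  calc #(G.edgeFinset ∩ S.sym2)
      ≤ #(G.edgeFinset ∩ (S.erase a).sym2 ∪ {b ∈ S | G.Adj a b}.image (s(a, ·))) :=
        card_le_card ?_
    _ ≤ _ := (card_union_le _ _).trans (by gcongr; exact card_image_le)
  intro e he
  induction e using Sym2.ind with | h x y => ?_
  simp only [mem_inter, mem_edgeFinset, mem_edgeSet, mk_mem_sym2_iff] at he
  simp only [mem_union, mem_inter, mem_edgeFinset, mem_edgeSet, mk_mem_sym2_iff, mem_erase,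
    mem_image, mem_filter]
  grind [Sym2.eq_swap, Adj.symm]

lemma exists_nonempty_forall_lt_card_adj (k : ℕ) (S : Finset V)
    (hS : k * #S < #(G.edgeFinset ∩ S.sym2)) :
    ∃ T : Finset V, T.Nonempty ∧ ∀ a ∈ T, k < #{b ∈ T | G.Adj a b} := by
  induction S using Finset.strongInduction with | H S ih => ?_
  by_cases hall : ∀ a ∈ S, k < #{b ∈ S | G.Adj a b}
  · have hsym : (G.edgeFinset ∩ S.sym2).Nonempty := card_pos.mp (by omega)
    exact ⟨S, sym2_nonempty.mp (hsym.mono inter_subset_right), hall⟩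
  push Not at hall
  obtain ⟨a, ha, hdeg⟩ := hall
  refine ih _ (erase_ssubset ha) ?_
  have := card_edgeFinset_inter_sym2_le (G := G) S a
  rw [← card_erase_add_one ha, mul_add_one] at hS
  omega

end Peeling

section Layers

variable {T : Finset V} {v u : V} {j : ℕ}

-- `G.dist v x = 0` also for `x` unreachable from `v`; only lower bounds on layers are used.
noncomputable def distLayer (G : SimpleGraph V) (T : Finset V) (v : V) (i : ℕ) : Finset V :=
  {x ∈ T | G.dist v x = i}

@[simp]
lemma mem_distLayer {x : V} {i : ℕ} : x ∈ G.distLayer T v i ↔ x ∈ T ∧ G.dist v x = i :=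
  mem_filter

lemma distLayer_subset {i : ℕ} : G.distLayer T v i ⊆ T :=
  filter_subset _ T

variable [DecidableRel G.Adj]

lemma card_adj_distLayer_le_one (hg : 2 * (j + 1) < G.egirth) (hu : G.dist v u = j + 1) :
    #{w ∈ G.distLayer T v j | G.Adj w u} ≤ 1 :=
  card_le_one.mpr fun w₁ h₁ w₂ h₂ => by
    simp only [mem_filter, mem_distLayer] at h₁ h₂
    exact eq_of_adj_of_adj_of_dist_eq_succ h₁.2 h₂.2 hu h₁.1.2 h₂.1.2 hg

lemma two_le_card_adj_distLayer_succ [DecidableEq V] (hT : ∀ a ∈ T, 3 ≤ #{b ∈ T | G.Adj a b})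
    (hg : 2 * (j + 2) < G.egirth) (hu : u ∈ G.distLayer T v (j + 1)) :
    2 ≤ #{w ∈ G.distLayer T v (j + 2) | G.Adj u w} := by
  rw [mem_distLayer] at hu
  have hsub : {b ∈ T | G.Adj u b} ⊆
      {w ∈ G.distLayer T v j | G.Adj w u} ∪ {w ∈ G.distLayer T v (j + 2) | G.Adj u w} := by
    intro w hw
    rw [mem_filter] at hw
    have hne : G.dist v w ≠ j + 1 := fun hw' => by
      have := hg.trans_le (egirth_le_of_adj_of_dist_eq hw.2.symm
        (Reachable.of_dist_ne_zero (by omega)) hu.2 hw')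
      norm_cast at this
      omega
    simp only [mem_union, mem_filter, mem_distLayer]
    rcases hw.2.diff_dist_adj (u := v) with h | h | h <;> grind [Adj.symm]
  have := (card_le_card hsub).trans (card_union_le _ _)
  have := card_adj_distLayer_le_one (T := T) (hg.trans_le' (by gcongr; norm_num)) hu.2
  have := hT u hu.1
  omega

lemma two_mul_card_distLayer_le [DecidableEq V] (hT : ∀ a ∈ T, 3 ≤ #{b ∈ T | G.Adj a b})
    (hg : 2 * (j + 2) < G.egirth) :
    2 * #(G.distLayer T v (j + 1)) ≤ #(G.distLayer T v (j + 2)) := by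
  have := card_mul_le_card_mul G.Adj (s := G.distLayer T v (j + 1))
    (t := G.distLayer T v (j + 2)) (fun _ hu => two_le_card_adj_distLayer_succ hT hg hu)
    (fun _ hw => card_adj_distLayer_le_one hg (mem_distLayer.mp hw).2)
  omega

lemma three_mul_two_pow_le_card_distLayer [DecidableEq V] (hv : v ∈ T)
    (hT : ∀ a ∈ T, 3 ≤ #{b ∈ T | G.Adj a b}) (hg : 2 * (j + 1) < G.egirth) :
    3 * 2 ^ j ≤ #(G.distLayer T v (j + 1)) := by
  induction j with
  | zero =>
    refine (hT v hv).trans (card_le_card fun b hb => ?_)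
    simp only [mem_filter] at hb
    simpa [hb.1] using hb.2
  | succ j ih =>
    have := ih (hg.trans_le' (by norm_cast; omega))
    have := two_mul_card_distLayer_le (v := v) (j := j) hT (by exact_mod_cast hg)
    show 3 * 2 ^ (j + 1) ≤ #(G.distLayer T v (j + 2))
    rw [pow_succ]
    omega

lemma two_pow_add_two_le_card [DecidableEq V] {k : ℕ} (hv : v ∈ T)
    (hT : ∀ a ∈ T, 3 ≤ #{b ∈ T | G.Adj a b}) (hg : 2 * (k + 1) < G.egirth) :
    2 ^ (k + 2) ≤ #T := by
  have hk : 2 ^ k ≤ #(G.distLayer T v k) := by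
    cases k with
    | zero => exact card_pos.mpr ⟨v, by simp [hv]⟩
    | succ m =>
      have := three_mul_two_pow_le_card_distLayer (j := m) hv hT
        (hg.trans_le' (by norm_cast; omega))
      rw [pow_succ]
      omega
  have hk₁ := three_mul_two_pow_le_card_distLayer hv hT hg
  have hdisj : Disjoint (G.distLayer T v k) (G.distLayer T v (k + 1)) :=
    disjoint_filter.mpr fun _ _ h => by omega
  have hunion : G.distLayer T v k ∪ G.distLayer T v (k + 1) ⊆ T :=
    union_subset distLayer_subset distLayer_subset
  have := card_le_card hunion
  rw [card_union_of_disjoint hdisj] at this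
  rw [pow_succ, pow_succ]
  omega

end Layers

lemma egirth_le_two_mul_log [DecidableEq V] [DecidableRel G.Adj] {T : Finset V}
    (hTne : T.Nonempty) (hT : ∀ a ∈ T, 3 ≤ #{b ∈ T | G.Adj a b}) :
    G.egirth ≤ 2 * Nat.log 2 #T := by
  obtain ⟨v, hv⟩ := hTne
  have h4 : 4 ≤ #T :=
    two_pow_add_two_le_card (k := 0) hv hT (lt_of_lt_of_le (by norm_num) G.three_le_egirth)
  obtain ⟨m, hm⟩ : ∃ m, Nat.log 2 #T = m + 1 :=
    Nat.exists_eq_succ_of_ne_zero (Nat.log_pos one_lt_two (by omega)).ne'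
  by_contra! hlt
  have hle := two_pow_add_two_le_card hv hT (k := m) (by rw [hm] at hlt; exact_mod_cast hlt)
  have hlt' := Nat.lt_pow_succ_log_self one_lt_two #T
  rw [hm] at hlt'
  exact lt_irrefl _ (hle.trans_lt hlt')

end SimpleGraph

open SimpleGraph in
theorem many_edges_short_cycle_general {V : Type*} [Fintype V]
    (G : SimpleGraph V) [DecidableRel G.Adj]
    (hm : 2 * Fintype.card V < G.edgeFinset.card) :
    ∃ (v : V) (w : G.Walk v v), w.IsCycle ∧
      (w.length : ℝ) ≤ 2 * Real.logb 2 (Fintype.card V) := by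
  classical
  obtain ⟨T, hTne, hT⟩ := G.exists_nonempty_forall_lt_card_adj 2 univ (by simpa using hm)
  have hg : G.egirth ≤ 2 * Nat.log 2 (Fintype.card V) :=
    (egirth_le_two_mul_log hTne hT).trans (by gcongr; exact card_le_univ T)
  obtain ⟨v, c, hc, hlen⟩ := exists_egirth_eq_length.mpr fun hacyc : G.IsAcyclic =>
    (hacyc.egirth_eq_top ▸ hg).not_gt (by exact_mod_cast ENat.natCast_lt_top _)
  refine ⟨v, c, hc, ?_⟩
  have hc_len : c.length ≤ 2 * Nat.log 2 (Fintype.card V) := by exact_mod_cast hlen ▸ hg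
  calc (c.length : ℝ) ≤ 2 * Nat.log 2 (Fintype.card V) := by exact_mod_cast hc_len
    _ ≤ 2 * Real.logb 2 (Fintype.card V) := by gcongr; exact_mod_cast Real.natLog_le_logb _ _

/-- Every finite simple undirected graph on `n` vertices with strictly more than `2n`
edges contains a cycle of length at most `2 · log₂ n`. -/
theorem many_edges_short_cycle {V : Type*} [Fintype V] [DecidableEq V]
    (G : SimpleGraph V) [DecidableRel G.Adj]
    (hm : 2 * Fintype.card V < G.edgeFinset.card) :
    ∃ (v : V) (w : G.Walk v v), w.IsCycle ∧
      (w.length : ℝ) ≤ 2 * Real.logb 2 (Fintype.card V) :=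
  many_edges_short_cycle_general G hm
end

section
/- Let T be a finite tree with n vertices and maximum degree D, whose vertices carry nonnegative integer labels c_v each at most X, with total label sum Σ_v c_v ≥ t for a positive integer t. Then the edge set of T can be partitioned by deleting a set of edges so that every resulting connected component has label sum at least t and at most D·t + X. -/
open scoped Classical
namespace TreeSplitAux
variable {V : Type*}

def rg (T : SimpleGraph V) (A : Finset V) : SimpleGraph V where
  Adj u v := T.Adj u v ∧ u ∈ A ∧ v ∈ A
  symm := by constructor; intro u v h; exact ⟨h.1.symm, h.2.2, h.2.1⟩
  loopless := by constructor; intro v h; exact T.loopless.irrefl v h.1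

lemma rg_le (T : SimpleGraph V) (A : Finset V) : rg T A ≤ T := fun _ _ h => h.1

lemma rg_acyclic {T : SimpleGraph V} (hT : T.IsAcyclic) (A : Finset V) :
    (rg T A).IsAcyclic := by
  intro v p hp
  exact hT (p.mapLe (rg_le T A)) (hp.mapLe _)

lemma rg_support_mem {T : SimpleGraph V} {A : Finset V} {u v : V}
    (p : (rg T A).Walk u v) (hu : u ∈ A) : ∀ x ∈ p.support, x ∈ A := by
  induction p with
  | nil => intro x hx; simp at hx; subst hx; exact hu
  | cons h q ih =>
    intro x hx
    rw [SimpleGraph.Walk.support_cons, List.mem_cons] at hx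
    rcases hx with rfl | hx
    · exact hu
    · exact ih h.2.2 x hx

lemma reach_of_support {T : SimpleGraph V} {A B : Finset V} {u v : V}
    (p : (rg T A).Walk u v) (hs : ∀ x ∈ p.support, x ∈ B) :
    (rg T B).Reachable u v := by
  induction p with
  | nil => exact SimpleGraph.Reachable.refl _
  | cons h q ih =>
    refine SimpleGraph.Reachable.trans ?_ (ih fun x hx => hs x (by
      rw [SimpleGraph.Walk.support_cons]; exact List.mem_cons_of_mem _ hx))
    exact SimpleGraph.Adj.reachable ⟨h.1, hs _ (SimpleGraph.Walk.start_mem_support _),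
      hs _ (by rw [SimpleGraph.Walk.support_cons]; exact List.mem_cons_of_mem _ q.start_mem_support)⟩

/-- the component of `b` after removing edge `ab` in the tree `rg T A`,
described via paths: vertices `u` whose path from `b` avoids `a`. -/
noncomputable def sideP (T : SimpleGraph V) (A : Finset V) (a b : V) : Finset V :=
  A.filter (fun u => ∃ q : (rg T A).Walk b u, q.IsPath ∧ a ∉ q.support)

lemma mem_sideP {T : SimpleGraph V} {A : Finset V} {a b u : V} :
    u ∈ sideP T A a b ↔ u ∈ A ∧ ∃ q : (rg T A).Walk b u, q.IsPath ∧ a ∉ q.support := by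
  simp [sideP]

lemma path_unique' {G : SimpleGraph V} (hac : G.IsAcyclic) {u v : V}
    {q r : G.Walk u v} (hq : q.IsPath) (hr : r.IsPath) : q = r := by
  have := hac.path_unique ⟨q, hq⟩ ⟨r, hr⟩
  exact congrArg Subtype.val this

lemma sideP_forall {T : SimpleGraph V} {A : Finset V} (hac : (rg T A).IsAcyclic)
    {a b u : V} (hu : u ∈ sideP T A a b) :
    ∀ q : (rg T A).Walk b u, q.IsPath → a ∉ q.support := by
  obtain ⟨-, r, hr, har⟩ := mem_sideP.1 hu
  intro q hq
  rw [path_unique' hac hq hr]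
  exact har

lemma self_mem_sideP {T : SimpleGraph V} {A : Finset V} {a b : V}
    (hb : b ∈ A) (hab : a ≠ b) : b ∈ sideP T A a b :=
  mem_sideP.2 ⟨hb, SimpleGraph.Walk.nil, by simp [hab]⟩

lemma not_mem_sideP {T : SimpleGraph V} {A : Finset V} {a b : V} :
    a ∉ sideP T A a b := by
  intro h
  obtain ⟨-, q, -, haq⟩ := mem_sideP.1 h
  exact haq q.end_mem_support

lemma sideP_subset {T : SimpleGraph V} {A : Finset V} {a b : V} :
    sideP T A a b ⊆ A := Finset.filter_subset _ _


lemma sideP_union {T : SimpleGraph V} {A : Finset V} {a b u : V}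
    (hadj : (rg T A).Adj a b) (hu : u ∈ A)
    (hr : (rg T A).Reachable a u) :
    u ∈ sideP T A a b ∨ u ∈ sideP T A b a := by
  obtain ⟨p₀⟩ := hr
  set p := p₀.toPath.val with hpdef
  have hp : p.IsPath := p₀.toPath.property
  by_cases hbp : b ∈ p.support
  · left
    refine mem_sideP.2 ⟨hu, p.dropUntil b hbp, hp.dropUntil hbp, ?_⟩
    intro ha
    have hspec := p.take_spec hbp
    have hnd := hp.support_nodup
    rw [← hspec, SimpleGraph.Walk.support_append] at hnd
    have ha' : a ∈ ((p.dropUntil b hbp).support).tail := by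
      have hne : a ≠ b := hadj.ne
      rw [SimpleGraph.Walk.support_eq_cons (p.dropUntil b hbp)] at ha
      rcases List.mem_cons.1 ha with h | h
      · exact absurd h hne
      · exact h
    exact (List.nodup_append.1 hnd).2.2 _ (SimpleGraph.Walk.start_mem_support _) _ ha' rfl
  · right
    exact mem_sideP.2 ⟨hu, p, hp, hbp⟩

lemma sideP_disjoint {T : SimpleGraph V} {A : Finset V} {a b : V}
    (hac : (rg T A).IsAcyclic) (hadj : (rg T A).Adj a b) :
    Disjoint (sideP T A a b) (sideP T A b a) := by
  rw [Finset.disjoint_left]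
  intro u hu1 hu2
  obtain ⟨-, q, hq, haq⟩ := mem_sideP.1 hu1
  have hcons : (SimpleGraph.Walk.cons hadj q).IsPath := hq.cons haq
  have hforall := sideP_forall hac hu2 (SimpleGraph.Walk.cons hadj q) hcons
  apply hforall
  rw [SimpleGraph.Walk.support_cons]
  exact List.mem_cons_of_mem _ q.start_mem_support

lemma sideP_conn {T : SimpleGraph V} {A : Finset V} {a b : V} (hb : b ∈ A)
    {u w : V} (hu : u ∈ sideP T A a b) (hw : w ∈ sideP T A a b) :
    (rg T (sideP T A a b)).Reachable u w := by
  have key : ∀ x ∈ sideP T A a b, (rg T (sideP T A a b)).Reachable b x := by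
    intro x hx
    obtain ⟨hxA, q, hq, haq⟩ := mem_sideP.1 hx
    refine reach_of_support q ?_
    intro y hy
    refine mem_sideP.2 ⟨rg_support_mem q hb y hy, q.takeUntil y hy, hq.takeUntil hy, ?_⟩
    intro hay
    exact haq (q.support_takeUntil_subset hy hay)
  exact (key u hu).symm.trans (key w hw)

lemma sideP_step {T : SimpleGraph V} {A : Finset V} {a b u : V}
    (hu : u ∈ sideP T A a b) (hub : u ≠ b) :
    ∃ w, (rg T A).Adj b w ∧ w ≠ a ∧ u ∈ sideP T A b w := by
  obtain ⟨huA, q, hq, haq⟩ := mem_sideP.1 hu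
  cases q with
  | nil => exact absurd rfl hub.symm
  | @cons _ w _ h q' =>
    rw [SimpleGraph.Walk.cons_isPath_iff] at hq
    refine ⟨w, h, ?_, mem_sideP.2 ⟨huA, q', hq.1, hq.2⟩⟩
    intro hwa
    subst hwa
    apply haq
    rw [SimpleGraph.Walk.support_cons]
    exact List.mem_cons_of_mem _ q'.start_mem_support

lemma sideP_nest {T : SimpleGraph V} {A : Finset V} {a b w : V}
    (hac : (rg T A).IsAcyclic) (hab : (rg T A).Adj a b) (hbw : (rg T A).Adj b w)
    (hwa : w ≠ a) :
    sideP T A b w ⊆ (sideP T A a b).erase b := by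
  intro u hu
  obtain ⟨huA, q, hq, hbq⟩ := mem_sideP.1 hu
  have hub : u ≠ b := by
    rintro rfl
    exact hbq q.end_mem_support
  have haq : a ∉ q.support := by
    intro haq
    -- then the unique path w → a would contain b and also not, contradiction
    have hpath1 : (q.takeUntil a haq).IsPath := hq.takeUntil haq
    have hb1 : b ∉ (q.takeUntil a haq).support := fun hb =>
      hbq (q.support_takeUntil_subset haq hb)
    -- explicit path w - b - a
    have hpath2 : (SimpleGraph.Walk.cons hbw.symm
        (SimpleGraph.Walk.cons hab.symm SimpleGraph.Walk.nil)).IsPath := by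
      rw [SimpleGraph.Walk.cons_isPath_iff]
      constructor
      · rw [SimpleGraph.Walk.cons_isPath_iff]
        exact ⟨SimpleGraph.Walk.IsPath.nil, by simp [hab.ne']⟩
      · simp [hwa, hbw.ne']
    have := path_unique' hac hpath1 hpath2
    rw [this] at hb1
    apply hb1
    rw [SimpleGraph.Walk.support_cons]
    exact List.mem_cons_of_mem _ (SimpleGraph.Walk.start_mem_support _)
  refine Finset.mem_erase.2 ⟨hub, mem_sideP.2 ⟨huA, SimpleGraph.Walk.cons hbw q, hq.cons hbq, ?_⟩⟩
  rw [SimpleGraph.Walk.support_cons]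
  intro h
  rcases List.mem_cons.1 h with h | h
  · exact hab.ne h
  · exact haq h

lemma sideP_sibling_disjoint {T : SimpleGraph V} {A : Finset V} {b w₁ w₂ : V}
    (hac : (rg T A).IsAcyclic) (h1 : (rg T A).Adj b w₁) (h2 : (rg T A).Adj b w₂)
    (hne : w₁ ≠ w₂) :
    Disjoint (sideP T A b w₁) (sideP T A b w₂) := by
  rw [Finset.disjoint_left]
  intro u hu1 hu2
  obtain ⟨huA, q1, hq1, hb1⟩ := mem_sideP.1 hu1
  obtain ⟨-, q2, hq2, hb2⟩ := mem_sideP.1 hu2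
  have hp1 : (SimpleGraph.Walk.cons h1 q1).IsPath := hq1.cons hb1
  have hp2 : (SimpleGraph.Walk.cons h2 q2).IsPath := hq2.cons hb2
  have := path_unique' hac hp1 hp2
  have hsupp := congrArg SimpleGraph.Walk.support this
  rw [SimpleGraph.Walk.support_cons, SimpleGraph.Walk.support_cons,
    SimpleGraph.Walk.support_eq_cons q1, SimpleGraph.Walk.support_eq_cons q2] at hsupp
  simp only [List.cons.injEq] at hsupp
  exact hne hsupp.2.1


lemma split {V : Type*} [Fintype V] {T : SimpleGraph V} (hac : T.IsAcyclic)
    {D X t : ℕ} (hD : ∀ v, T.degree v ≤ D) {c : V → ℕ} (hX : ∀ v, c v ≤ X) (ht : 0 < t)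
    {A : Finset V}
    (hconn : ∀ u ∈ A, ∀ v ∈ A, (rg T A).Reachable u v)
    (hbig : D * t + X < ∑ v ∈ A, c v) :
    ∃ B : Finset V, B ⊆ A ∧ B.Nonempty ∧
      (∀ u ∈ B, ∀ v ∈ B, (rg T B).Reachable u v) ∧
      (∀ u ∈ A \ B, ∀ v ∈ A \ B, (rg T (A \ B)).Reachable u v) ∧
      t ≤ ∑ v ∈ B, c v ∧ (∑ v ∈ B, c v ≤ D * t + X) ∧ t ≤ ∑ v ∈ A \ B, c v := by
  have hacA : (rg T A).IsAcyclic := rg_acyclic hac A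
  -- there is an edge inside A
  obtain ⟨a₀, b₀, hadj₀⟩ : ∃ a b, (rg T A).Adj a b := by
    have hApos : (0:ℕ) < ∑ v ∈ A, c v := lt_of_le_of_lt (Nat.zero_le _) hbig
    have hAne : A.Nonempty := by
      rcases A.eq_empty_or_nonempty with rfl | h
      · simp at hApos
      · exact h
    obtain ⟨v₀, hv₀⟩ := hAne
    have : ∃ u ∈ A, u ≠ v₀ := by
      by_contra h
      push_neg at h
      have hsub : A ⊆ {v₀} := fun u hu => Finset.mem_singleton.2 (h u hu)
      have : ∑ v ∈ A, c v ≤ ∑ v ∈ ({v₀} : Finset V), c v :=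
        Finset.sum_le_sum_of_subset hsub
      rw [Finset.sum_singleton] at this
      have : ∑ v ∈ A, c v ≤ X := le_trans this (hX v₀)
      omega
    obtain ⟨u, huA, huv⟩ := this
    obtain ⟨p⟩ := hconn u huA v₀ hv₀
    cases p with
    | nil => exact absurd rfl huv
    | cons h _ => exact ⟨_, _, h⟩
  -- sums of the two sides of an edge add up to the total
  have hsum : ∀ a b, (rg T A).Adj a b →
      ∑ v ∈ sideP T A a b, c v + ∑ v ∈ sideP T A b a, c v = ∑ v ∈ A, c v := by
    intro a b hadj
    have hunion : sideP T A a b ∪ sideP T A b a = A := by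
      apply Finset.Subset.antisymm
      · exact Finset.union_subset sideP_subset sideP_subset
      · intro u hu
        exact Finset.mem_union.2 (sideP_union hadj hu (hconn a hadj.2.1 u hu))
    rw [← Finset.sum_union (sideP_disjoint hacA hadj), hunion]
  -- D ≥ 1
  have hD1 : 1 ≤ D := by
    have : 0 < T.degree a₀ := by
      rw [T.degree_pos_iff_exists_adj a₀]
      exact ⟨b₀, hadj₀.1⟩
    exact le_trans this (hD a₀)
  -- bound on the side of an edge whose sibling sides are all small
  have hbound : ∀ a b, (rg T A).Adj a b →
      (∀ w, (rg T A).Adj b w → w ≠ a → ∑ v ∈ sideP T A b w, c v ≤ t - 1) →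
      ∑ v ∈ sideP T A a b, c v ≤ X + (D - 1) * (t - 1) := by
    intro a b hadj hsmall
    set B := sideP T A a b with hB
    have hbB : b ∈ B := self_mem_sideP hadj.2.2 hadj.ne
    set Nb : Finset V := A.filter (fun w => (rg T A).Adj b w ∧ w ≠ a) with hNb
    have hcover : B.erase b ⊆ Nb.biUnion (fun w => sideP T A b w) := by
      intro u hu
      obtain ⟨hub, huB⟩ := Finset.mem_erase.1 hu
      obtain ⟨w, hw, hwa, huw⟩ := sideP_step huB hub
      exact Finset.mem_biUnion.2 ⟨w, Finset.mem_filter.2 ⟨hw.2.2, hw, hwa⟩, huw⟩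
    have hdisj : (Nb : Set V).Pairwise
        (fun w₁ w₂ => Disjoint (sideP T A b w₁) (sideP T A b w₂)) := by
      intro w₁ h1 w₂ h2 hne
      exact sideP_sibling_disjoint hacA (Finset.mem_filter.1 h1).2.1
        (Finset.mem_filter.1 h2).2.1 hne
    have hNbcard : Nb.card ≤ D - 1 := by
      have hsub : Nb ⊆ (T.neighborFinset b).erase a := by
        intro w hw
        obtain ⟨-, hadj', hwa⟩ := Finset.mem_filter.1 hw
        exact Finset.mem_erase.2 ⟨hwa, (T.mem_neighborFinset b w).2 hadj'.1⟩
      have h1 := Finset.card_le_card hsub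
      have h2 : ((T.neighborFinset b).erase a).card = T.degree b - 1 := by
        rw [Finset.card_erase_of_mem ((T.mem_neighborFinset b a).2 hadj.1.symm)]
        rfl
      have h3 := hD b
      omega
    calc ∑ v ∈ B, c v = c b + ∑ v ∈ B.erase b, c v := (Finset.add_sum_erase _ _ hbB).symm
      _ ≤ X + ∑ v ∈ B.erase b, c v := by
          exact Nat.add_le_add_right (hX b) _
      _ ≤ X + ∑ v ∈ Nb.biUnion (fun w => sideP T A b w), c v := by
          exact Nat.add_le_add_left (Finset.sum_le_sum_of_subset hcover) _
      _ = X + ∑ w ∈ Nb, ∑ v ∈ sideP T A b w, c v := by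
          rw [Finset.sum_biUnion hdisj]
      _ ≤ X + ∑ w ∈ Nb, (t - 1) := by
          refine Nat.add_le_add_left (Finset.sum_le_sum ?_) _
          intro w hw
          obtain ⟨-, hadj', hwa⟩ := Finset.mem_filter.1 hw
          exact hsmall w hadj' hwa
      _ = X + Nb.card * (t - 1) := by rw [Finset.sum_const, smul_eq_mul]
      _ ≤ X + (D - 1) * (t - 1) := by
          exact Nat.add_le_add_left (Nat.mul_le_mul_right _ hNbcard) _
  -- there exists an edge with a heavy side
  have hexists : ∃ p : V × V, (rg T A).Adj p.1 p.2 ∧ t ≤ ∑ v ∈ sideP T A p.1 p.2, c v := by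
    by_contra h
    push_neg at h
    have hsmall : ∀ a b, (rg T A).Adj a b → ∑ v ∈ sideP T A a b, c v ≤ t - 1 := by
      intro a b hadj
      have hh := h (a, b) hadj
      dsimp only at hh
      omega
    have h1 := hbound a₀ b₀ hadj₀ (fun w hw hwa => hsmall b₀ w hw)
    have h2 := hsmall b₀ a₀ hadj₀.symm
    have h3 := hsum a₀ b₀ hadj₀
    obtain ⟨d, rfl⟩ : ∃ d, D = d + 1 := ⟨D - 1, by omega⟩
    obtain ⟨s, rfl⟩ : ∃ s, t = s + 1 := ⟨t - 1, by omega⟩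
    simp only [Nat.add_sub_cancel] at h1 h2
    have hexp : (d + 1) * (s + 1) = d * s + d + s + 1 := by ring
    omega
  -- minimize the heavy side
  set M : Finset (V × V) := Finset.univ.filter
    (fun p : V × V => (rg T A).Adj p.1 p.2 ∧ t ≤ ∑ v ∈ sideP T A p.1 p.2, c v) with hM
  have hMne : M.Nonempty := by
    obtain ⟨p, hp1, hp2⟩ := hexists
    exact ⟨p, Finset.mem_filter.2 ⟨Finset.mem_univ _, hp1, hp2⟩⟩
  obtain ⟨p, hpM, hpmin⟩ := M.exists_min_image (fun p => (sideP T A p.1 p.2).card) hMne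
  obtain ⟨a, b⟩ := p
  obtain ⟨-, hadj, hBt⟩ := Finset.mem_filter.1 hpM
  dsimp only at hadj hBt hpmin
  set B := sideP T A a b with hBdef
  have hbB : b ∈ B := self_mem_sideP hadj.2.2 hadj.ne
  -- sibling sides are small
  have hsmall : ∀ w, (rg T A).Adj b w → w ≠ a → ∑ v ∈ sideP T A b w, c v ≤ t - 1 := by
    intro w hw hwa
    by_contra hcon
    push_neg at hcon
    have hwt : t ≤ ∑ v ∈ sideP T A b w, c v := by omega
    have hwM : (b, w) ∈ M := Finset.mem_filter.2 ⟨Finset.mem_univ _, hw, hwt⟩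
    have hlt : (sideP T A b w).card < B.card := by
      have hsub := sideP_nest hacA hadj hw hwa
      have h1 := Finset.card_le_card hsub
      rw [← hBdef] at h1
      have h2 : (B.erase b).card = B.card - 1 := Finset.card_erase_of_mem hbB
      have h3 : 0 < B.card := Finset.card_pos.2 ⟨b, hbB⟩
      omega
    have hmin := hpmin (b, w) hwM
    dsimp only at hmin
    omega
  have hBle : ∑ v ∈ B, c v ≤ X + (D - 1) * (t - 1) := hbound a b hadj hsmall
  have hcompl : A \ B = sideP T A b a := by
    apply Finset.Subset.antisymm
    · intro u hu
      obtain ⟨huA, huB⟩ := Finset.mem_sdiff.1 hu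
      rcases sideP_union hadj huA (hconn a hadj.2.1 u huA) with h | h
      · exact absurd h huB
      · exact h
    · intro u hu
      refine Finset.mem_sdiff.2 ⟨sideP_subset hu, ?_⟩
      exact Finset.disjoint_right.1 (sideP_disjoint hacA hadj) hu
  have hsumAB := hsum a b hadj
  rw [← hBdef] at hsumAB
  have hle2 : ∑ v ∈ B, c v ≤ D * t + X := by
    refine le_trans hBle ?_
    have : (D - 1) * (t - 1) ≤ D * t :=
      Nat.mul_le_mul (Nat.sub_le _ _) (Nat.sub_le _ _)
    omega
  refine ⟨B, sideP_subset, ⟨b, hbB⟩, ?_, ?_, hBt, hle2, ?_⟩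
  · intro u hu v hv
    exact sideP_conn hadj.2.2 hu hv
  · intro u hu v hv
    rw [hcompl] at hu hv
    have := sideP_conn hadj.2.1 hu hv
    rwa [hcompl]
  · rw [hcompl]
    obtain ⟨d, rfl⟩ : ∃ d, D = d + 1 := ⟨D - 1, by omega⟩
    obtain ⟨s, rfl⟩ : ∃ s, t = s + 1 := ⟨t - 1, by omega⟩
    simp only [Nat.add_sub_cancel] at hBle
    have hexp : (d + 1) * (s + 1) = d * s + d + s + 1 := by ring
    omega


lemma partition {V : Type*} [Fintype V] {T : SimpleGraph V} (hac : T.IsAcyclic)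
    {D X t : ℕ} (hD : ∀ v, T.degree v ≤ D) {c : V → ℕ} (hX : ∀ v, c v ≤ X) (ht : 0 < t) :
    ∀ n (A : Finset V), A.card ≤ n →
      (∀ u ∈ A, ∀ v ∈ A, (rg T A).Reachable u v) → t ≤ ∑ v ∈ A, c v →
      ∃ f : V → Finset V, ∀ v ∈ A, v ∈ f v ∧ f v ⊆ A ∧
        (∀ u ∈ f v, ∀ w ∈ f v, (rg T (f v)).Reachable u w) ∧
        t ≤ ∑ u ∈ f v, c u ∧ ∑ u ∈ f v, c u ≤ D * t + X ∧
        ∀ u ∈ f v, f u = f v := by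
  intro n
  induction n with
  | zero =>
    intro A hA hconn hsum
    have : A = ∅ := Finset.card_eq_zero.1 (Nat.le_zero.1 hA)
    subst this
    simp at hsum
    omega
  | succ n ih =>
    intro A hA hconn hsum
    by_cases hb : ∑ v ∈ A, c v ≤ D * t + X
    · exact ⟨fun _ => A, fun v hv =>
        ⟨hv, subset_rfl, hconn, hsum, hb, fun u _ => rfl⟩⟩
    · push_neg at hb
      obtain ⟨B, hBA, hBne, hconnB, hconnAB, hBt, hBle, hABt⟩ :=
        split hac hD hX ht hconn hb
      have hcard : (A \ B).card ≤ n := by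
        have h1 : (A \ B).card = A.card - B.card := Finset.card_sdiff_of_subset hBA
        have h2 : 0 < B.card := Finset.card_pos.2 hBne
        have h3 : B.card ≤ A.card := Finset.card_le_card hBA
        omega
      obtain ⟨f', hf'⟩ := ih (A \ B) hcard hconnAB hABt
      refine ⟨fun v => if v ∈ B then B else f' v, ?_⟩
      intro v hv
      by_cases hvB : v ∈ B
      · simp only [if_pos hvB]
        refine ⟨hvB, hBA, hconnB, hBt, hBle, ?_⟩
        intro u hu
        simp only [if_pos hu]
      · have hvAB : v ∈ A \ B := Finset.mem_sdiff.2 ⟨hv, hvB⟩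
        obtain ⟨h1, h2, h3, h4, h5, h6⟩ := hf' v hvAB
        simp only [if_neg hvB]
        refine ⟨h1, h2.trans (Finset.sdiff_subset), h3, h4, h5, ?_⟩
        intro u hu
        have huB : u ∉ B := (Finset.mem_sdiff.1 (h2 hu)).2
        simp only [if_neg huB]
        exact h6 u hu

end TreeSplitAux

/-- Let `T` be a finite tree with `n` vertices and maximum degree `D`, whose vertices
carry nonnegative integer labels `c v ≤ X` with total label sum at least `t > 0`.
Then one can delete a set of edges of `T` so that every connected component of the
remaining forest has label sum at least `t` and at most `D·t + X`. -/
theorem tree_split {V : Type*} [Fintype V]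
    (T : SimpleGraph V) (hT : T.IsTree)
    (D : ℕ) (hD : ∀ v, T.degree v ≤ D)
    (c : V → ℕ) (X : ℕ) (hX : ∀ v, c v ≤ X)
    (t : ℕ) (ht : 0 < t) (htot : t ≤ ∑ v, c v) :
    ∃ R : Set (Sym2 V),
      R ⊆ T.edgeSet ∧
      ∀ v : V,
        t ≤ ∑ w ∈ Finset.univ.filter (fun w => (T.deleteEdges R).Reachable v w), c w ∧
        ∑ w ∈ Finset.univ.filter (fun w => (T.deleteEdges R).Reachable v w), c w ≤ D * t + X := by
  classical
  have huniv : TreeSplitAux.rg T Finset.univ = T := by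
    ext u v
    exact ⟨fun h => h.1, fun h => ⟨h, Finset.mem_univ _, Finset.mem_univ _⟩⟩
  have hconn : ∀ u ∈ (Finset.univ : Finset V), ∀ v ∈ (Finset.univ : Finset V),
      (TreeSplitAux.rg T Finset.univ).Reachable u v := by
    intro u _ v _
    rw [huniv]
    exact hT.isConnected u v
  obtain ⟨f, hf⟩ := TreeSplitAux.partition hT.IsAcyclic hD hX ht
    (Finset.univ.card) Finset.univ le_rfl hconn htot
  have hmem : ∀ v, v ∈ f v := fun v => (hf v (Finset.mem_univ v)).1
  have hclass : ∀ v, ∀ u ∈ f v, f u = f v := fun v => (hf v (Finset.mem_univ v)).2.2.2.2.2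
  have hconnf : ∀ v, ∀ u ∈ f v, ∀ w ∈ f v, (TreeSplitAux.rg T (f v)).Reachable u w :=
    fun v => (hf v (Finset.mem_univ v)).2.2.1
  refine ⟨{e | ∃ u w, e = s(u, w) ∧ T.Adj u w ∧ f u ≠ f w}, ?_, ?_⟩
  · rintro e ⟨u, w, rfl, hadj, -⟩
    exact hadj
  · set R : Set (Sym2 V) := {e | ∃ u w, e = s(u, w) ∧ T.Adj u w ∧ f u ≠ f w} with hR
    intro v
    have hstep : ∀ x y, (T.deleteEdges R).Adj x y → f x = f y := by
      intro x y hxy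
      rw [SimpleGraph.deleteEdges_adj] at hxy
      by_contra hne
      exact hxy.2 ⟨x, y, rfl, hxy.1, hne⟩
    have hreach : ∀ {x y : V}, (T.deleteEdges R).Reachable x y → f x = f y := by
      intro x y h
      obtain ⟨p⟩ := h
      induction p with
      | nil => rfl
      | cons h q ih => exact (hstep _ _ h).trans ih
    have hle : TreeSplitAux.rg T (f v) ≤ T.deleteEdges R := by
      intro x y hxy
      rw [SimpleGraph.deleteEdges_adj]
      refine ⟨hxy.1, ?_⟩
      rintro ⟨u', w', heq, -, hne⟩
      have hx : f x = f v := hclass v x hxy.2.1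
      have hy : f y = f v := hclass v y hxy.2.2
      rcases Sym2.eq_iff.1 heq with ⟨h1, h2⟩ | ⟨h1, h2⟩
      · rw [← h1, ← h2, hx, hy] at hne; exact hne rfl
      · rw [← h1, ← h2, hx, hy] at hne; exact hne rfl
    have hfilter : Finset.univ.filter (fun w => (T.deleteEdges R).Reachable v w) = f v := by
      ext w
      simp only [Finset.mem_filter, Finset.mem_univ, true_and]
      constructor
      · intro hr
        have := hreach hr
        rw [this]
        exact hmem w
      · intro hw
        exact (hconnf v v (hmem v) w hw).mono hle
    have hfilter' : ∀ i : DecidablePred (fun w => (T.deleteEdges R).Reachable v w),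
        @Finset.filter V (fun w => (T.deleteEdges R).Reachable v w) i Finset.univ = f v := by
      intro i; convert hfilter
    rw [hfilter']
    exact ⟨(hf v (Finset.mem_univ v)).2.2.2.1, (hf v (Finset.mem_univ v)).2.2.2.2.1⟩
end

section
/- Let G be a finite simple graph with n vertices and m ≥ n edges. There exists a graph H with at most 2n vertices, exactly m edges, and maximum degree at most ⌈2m/n⌉, together with a map φ from V(H) onto V(G) inducing a bijection between E(H) and E(G), obtained by splitting each vertex v of G into ⌈deg(v)/⌈2m/n⌉⌉ copies each receiving at most ⌈2m/n⌉ of v's incident edges. -/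
/-!
Let `Δ = ⌈2m/n⌉`, so that `2m ≤ nΔ`. Number the edges at each vertex `v` as
`0, …, deg v - 1` and hand edge number `j` to copy `j / Δ` of `v`. Every copy receives at most
`Δ` edges, and `v` needs only `deg v / Δ + 1` copies, so by the handshake lemma there are at most
`n + 2m/Δ ≤ 2n` copies in all. An edge `uv` of `G` becomes the edge between the copies of `u`
and `v` that received it.
-/

open Finset

lemma Nat.sum_div_le_div_sum {ι : Type*} (s : Finset ι) (f : ι → ℕ) (d : ℕ) :
    ∑ i ∈ s, f i / d ≤ (∑ i ∈ s, f i) / d := by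
  rcases Nat.eq_zero_or_pos d with rfl | hd
  · simp
  rw [Nat.le_div_iff_mul_le hd, Finset.sum_mul]
  exact Finset.sum_le_sum fun i _ => Nat.div_mul_le_self (f i) d

lemma Nat.div_ceilDiv_le (a n : ℕ) : a / (a ⌈/⌉ n) ≤ n := by
  rcases Nat.eq_zero_or_pos n with rfl | hn
  · simp
  exact Nat.div_le_of_le_mul (mul_comm n _ ▸ le_smul_ceilDiv hn)

namespace SimpleGraph

variable {V : Type*} [Fintype V] (G : SimpleGraph V) [DecidableRel G.Adj] (Δ : ℕ)

abbrev SplitVertex : Type _ := Σ v : V, Fin (G.degree v / Δ + 1)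

lemma card_splitVertex_le :
    Fintype.card (G.SplitVertex Δ) ≤ Fintype.card V + 2 * #G.edgeFinset / Δ := by
  calc Fintype.card (G.SplitVertex Δ) = ∑ v, (G.degree v / Δ + 1) := by simp
    _ = ∑ v, G.degree v / Δ + Fintype.card V := by simp [sum_add_distrib]
    _ ≤ (∑ v, G.degree v) / Δ + Fintype.card V := by gcongr; exact Nat.sum_div_le_div_sum _ _ _
    _ = Fintype.card V + 2 * #G.edgeFinset / Δ := by rw [sum_degrees_eq_twice_card_edges, add_comm]

variable [DecidableEq V]

/-- `0` is a junk value for edges not at `v`. -/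
noncomputable def incidenceIndex (v : V) (e : Sym2 V) : ℕ :=
  if h : e ∈ G.incidenceFinset v then
    Finset.equivFinOfCardEq (G.card_incidenceFinset_eq_degree v) ⟨e, h⟩
  else 0

lemma incidenceIndex_le_degree (v : V) (e : Sym2 V) : G.incidenceIndex v e ≤ G.degree v := by
  unfold incidenceIndex
  split_ifs
  · exact Fin.is_le'
  · exact Nat.zero_le _

lemma incidenceIndex_injOn (v : V) : Set.InjOn (G.incidenceIndex v) (G.incidenceSet v) := by
  intro e₁ h₁ e₂ h₂ he
  rw [← mem_incidenceFinset] at h₁ h₂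
  simp only [incidenceIndex, dif_pos h₁, dif_pos h₂, Fin.val_inj, EmbeddingLike.apply_eq_iff_eq,
    Subtype.mk.injEq] at he
  exact he

noncomputable def splitCopy (e : Sym2 V) (v : V) : G.SplitVertex Δ :=
  ⟨v, G.incidenceIndex v e / Δ,
    Nat.lt_succ_of_le (Nat.div_le_div_right (G.incidenceIndex_le_degree v e))⟩

noncomputable def splitEdge (e : Sym2 V) : Sym2 (G.SplitVertex Δ) :=
  e.map (G.splitCopy Δ e)

lemma map_fst_splitEdge (e : Sym2 V) : (G.splitEdge Δ e).map Sigma.fst = e := by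
  rw [splitEdge, Sym2.map_map]
  exact congrFun Sym2.map_id' e

lemma mem_splitEdge {e : Sym2 V} {w : G.SplitVertex Δ} :
    w ∈ G.splitEdge Δ e ↔ w.1 ∈ e ∧ G.incidenceIndex w.1 e / Δ = w.2 := by
  obtain ⟨v, i⟩ := w
  simp only [splitEdge, Sym2.mem_map, splitCopy, Sigma.mk.injEq]
  constructor
  · rintro ⟨x, hx, rfl, h⟩
    exact ⟨hx, Fin.ext_iff.1 (eq_of_heq h)⟩
  · rintro ⟨hv, h⟩
    exact ⟨v, hv, rfl, heq_of_eq (Fin.ext h)⟩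

lemma ncard_mem_splitEdge_le (hΔ : 0 < Δ) (w : G.SplitVertex Δ) :
    {e ∈ G.edgeSet | w ∈ G.splitEdge Δ e}.ncard ≤ Δ := by
  have hsub : {e ∈ G.edgeSet | w ∈ G.splitEdge Δ e} ⊆ G.incidenceSet w.1 :=
    fun e ⟨he, hw⟩ => ⟨he, ((G.mem_splitEdge Δ).1 hw).1⟩
  calc {e ∈ G.edgeSet | w ∈ G.splitEdge Δ e}.ncard
      ≤ (Ico (w.2 * Δ) (w.2 * Δ + Δ) : Set ℕ).ncard := by
        refine Set.ncard_le_ncard_of_injOn (G.incidenceIndex w.1) ?_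
          ((G.incidenceIndex_injOn w.1).mono hsub) (Set.toFinite _)
        rintro e ⟨-, hw⟩
        have := (Nat.div_eq_iff hΔ).1 ((G.mem_splitEdge Δ).1 hw).2
        simp only [coe_Ico, Set.mem_Ico]
        omega
    _ = Δ := by simp

end SimpleGraph

open SimpleGraph in
/-- Let `G` be a finite simple graph with `n` vertices and `m ≥ n` edges.  There exists a
(multi)graph `H` — given by a vertex set `W` and, for each edge of `G`, a lifted unordered
pair of vertices of `W` — with at most `2n` vertices, exactly `m` edges, and maximum degree
at most `⌈2m/n⌉`, together with a map `φ` from the vertices of `H` onto the vertices of `G`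
inducing a bijection between the edges of `H` and the edges of `G`. -/
theorem graph_reduce_exists {V : Type*} [Fintype V] [DecidableEq V]
    (G : SimpleGraph V) [DecidableRel G.Adj] (n m : ℕ)
    (hn : Fintype.card V = n) (hm : G.edgeFinset.card = m) (hmn : n ≤ m) :
    ∃ (W : Type) (_ : Fintype W) (φ : W → V) (ψ : Sym2 V → Sym2 W),
      -- at most 2n vertices
      Nat.card W ≤ 2 * n ∧
      -- φ maps V(H) onto V(G)
      Function.Surjective φ ∧
      -- each edge of G lifts to an edge of H lying over it (so ψ is injective on edges,
      -- and edge e of H projects to edge φ(e) of G: a bijection between E(H) and E(G))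
      (∀ e ∈ G.edgeSet, Sym2.map φ (ψ e) = e) ∧
      -- H has exactly m edges
      (ψ '' G.edgeSet).ncard = m ∧
      -- maximum degree of H is at most ⌈2m/n⌉
      (∀ w : W, {e ∈ G.edgeSet | w ∈ ψ e}.ncard ≤ (2 * m + n - 1) / n) := by
  rw [← Nat.ceilDiv_eq_add_pred_div]
  set Δ := 2 * m ⌈/⌉ n
  let ε := (Fintype.equivFin (G.SplitVertex Δ)).symm
  let φ : Fin (Fintype.card (G.SplitVertex Δ)) → V := fun w => (ε w).1
  let ψ : Sym2 V → Sym2 (Fin (Fintype.card (G.SplitVertex Δ))) := fun e =>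
    (G.splitEdge Δ e).map ε.symm
  have hlift : ∀ e, Sym2.map φ (ψ e) = e := fun e => by
    simp only [φ, ψ, Sym2.map_map, Function.comp_def, Equiv.apply_symm_apply]
    exact G.map_fst_splitEdge Δ e
  have hmem : ∀ w e, w ∈ ψ e ↔ ε w ∈ G.splitEdge Δ e := fun w e => by
    simp [ψ, Sym2.mem_map, Equiv.symm_apply_eq]
  refine ⟨_, inferInstance, φ, ψ, ?_, fun v => ⟨ε.symm ⟨v, 0⟩, by simp [φ]⟩,
    fun e _ => hlift e, ?_, fun w => ?_⟩
  · calc Nat.card _ = Fintype.card (G.SplitVertex Δ) := by simp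
      _ ≤ n + 2 * m / Δ := hn ▸ hm ▸ G.card_splitVertex_le Δ
      _ ≤ n + n := Nat.add_le_add_left (Nat.div_ceilDiv_le (2 * m) n) n
      _ = 2 * n := (two_mul n).symm
  · rw [Set.ncard_image_of_injective _ (Function.LeftInverse.injective hlift), ← hm,
      ← coe_edgeFinset, Set.ncard_coe_finset]
  · have hn0 : 0 < n := hn ▸ Fintype.card_pos_iff.2 ⟨φ w⟩
    simp only [hmem]
    have hΔ : 0 < (2 * m + n - 1) / n := Nat.div_pos (by omega) hn0
    exact G.ncard_mem_splitEdge_le Δ hΔ (ε w)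
end

section
/- Let G be a graph with n vertices and m edges all of whose degrees are even, obtained say after edge removals making all degrees even. If one repeatedly halves the graph by taking Euler tours in each connected component and deleting alternate edges (possibly first removing at most one edge per odd-edge-count component and at most n edges to fix parities), then after r rounds the number of remaining edges E_r satisfies m/2^r − 2n ≤ E_r ≤ m/2^r. -/
/-! Each round maps the edge count `e` into `[e/2 - n, e/2]`. Unrolling the upper bound gives
`m/2^r`; unrolling the lower bound loses `n (1 + 1/2 + 1/4 + ⋯) ≤ 2n`, and indeed
`m/2^r - 2n` is stable under `t ↦ t/2 - n`, which closes the induction. -/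

section HalvingRecursion

variable {K : Type*} [Field K] [LinearOrder K] [IsStrictOrderedRing K] (x : ℕ → K)

theorem le_div_two_pow_of_le_half (hx : ∀ r, x (r + 1) ≤ x r / 2) (r : ℕ) :
    x r ≤ x 0 / 2 ^ r := by
  induction r with
  | zero => simp
  | succ r ih =>
    calc x (r + 1) ≤ x r / 2 := hx r
      _ ≤ x 0 / 2 ^ r / 2 := by gcongr
      _ = x 0 / 2 ^ (r + 1) := by rw [pow_succ, div_div]

theorem div_two_pow_sub_two_mul_le_of_half_sub_le {c : K} (hc : 0 ≤ c)
    (hx : ∀ r, x r / 2 - c ≤ x (r + 1)) (r : ℕ) : x 0 / 2 ^ r - 2 * c ≤ x r := by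
  induction r with
  | zero => simpa using hc
  | succ r ih =>
    calc x 0 / 2 ^ (r + 1) - 2 * c = (x 0 / 2 ^ r - 2 * c) / 2 - c := by ring
      _ ≤ x r / 2 - c := by gcongr
      _ ≤ x (r + 1) := hx r

end HalvingRecursion

/-- Repeated halving via Euler tours: starting from a graph with `m` edges on at most `n`
vertices, each round (after removing at most `n` edges to fix parities and then deleting
alternate edges along Euler tours) leaves between `e/2 − n` and `e/2` of the previous
round's `e` edges.  Then after `r` rounds the number `E r` of remaining edges satisfies
`m/2^r − 2n ≤ E r ≤ m/2^r`. -/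
theorem repeated_halving_bounds (n m : ℕ) (E : ℕ → ℕ)
    (h0 : E 0 = m)
    (hround : ∀ r : ℕ,
      ((E r : ℝ) / 2 - n ≤ E (r + 1)) ∧ ((E (r + 1) : ℝ) ≤ (E r : ℝ) / 2)) :
    ∀ r : ℕ, (m : ℝ) / 2 ^ r - 2 * n ≤ E r ∧ (E r : ℝ) ≤ (m : ℝ) / 2 ^ r := by
  intro r
  rw [← h0]
  exact ⟨div_two_pow_sub_two_mul_le_of_half_sub_le (fun k ↦ (E k : ℝ))
      n.cast_nonneg (fun k ↦ (hround k).1) r,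
    le_div_two_pow_of_le_half (fun k ↦ (E k : ℝ)) (fun k ↦ (hround k).2) r⟩
end

section
/- Let G be a graph with n vertices, m edges, and maximum degree Δ(G), and let k ≤ m. There exists a subgraph G' of G with exactly k edges and maximum degree Δ(G') ≤ (2k + 4n)·Δ(G)/m. -/
/-!
Greedy: add edges of `G` one at a time, never letting a degree exceed
`t = ⌊2kΔ/m⌋ + 1`. While `j < k` edges are chosen, at most `2j/t` vertices are saturated, and
they block at most `2j(Δ - t)/t < m - j` of the remaining edges, so some edge can still be
added. Finally `t ≤ (2k + 4n)Δ/m` because `m ≤ nΔ/2`.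
-/

open Finset

theorem Nat.mul_sub_lt_sub_of_mul_le {b t j m d : ℕ} (hb : b * t ≤ 2 * j) (hj : j < m)
    (h : 2 * j * d < m * t) : b * (d - t) < m - j := by
  have ht : 0 < t := by rcases Nat.eq_zero_or_pos t with rfl | h' <;> simp_all
  rcases le_total t d with hle | hle
  · obtain ⟨d, rfl⟩ := Nat.exists_eq_add_of_le hle
    rw [Nat.add_sub_cancel_left]
    have : b * d * t < (m - j) * t := by
      rw [Nat.sub_mul]; apply Nat.lt_sub_of_add_lt; nlinarith
    exact Nat.lt_of_mul_lt_mul_right this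
  · rw [Nat.sub_eq_zero_of_le hle]; omega

theorem Nat.cast_div_add_one_le_div {α : Type*} [Field α] [LinearOrder α] [IsStrictOrderedRing α]
    {a c m : ℕ} (hm : 0 < m) (hc : m ≤ c) : ((a / m + 1 : ℕ) : α) ≤ (a + c) / m := by
  have hmα : (0 : α) < m := by exact_mod_cast hm
  rw [add_div, Nat.cast_add, Nat.cast_one]
  gcongr
  · exact Nat.cast_div_le
  · rw [le_div_iff₀ hmα, one_mul]; exact_mod_cast hc

namespace SimpleGraph

variable {V : Type*} {G H : SimpleGraph V}

lemma ncard_neighborSet_edge_le_one (a b v : V) : ((edge a b).neighborSet v).ncard ≤ 1 := by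
  have hsub : ((edge a b).neighborSet v).Subsingleton := fun x hx y hy => by
    simp only [mem_neighborSet, edge_adj] at hx hy
    grind
  exact (Set.ncard_le_one hsub.finite).2 hsub

lemma neighborSet_sup_edge_of_ne {a b v : V} (ha : v ≠ a) (hb : v ≠ b) :
    (H ⊔ edge a b).neighborSet v = H.neighborSet v := by
  ext w
  simp [edge_adj, ha, hb]

lemma ncard_neighborSet_sup_edge_le (a b v : V) :
    ((H ⊔ edge a b).neighborSet v).ncard ≤ (H.neighborSet v).ncard + 1 :=
  (Set.ncard_union_le _ _).trans (Nat.add_le_add_left (ncard_neighborSet_edge_le_one a b v) _)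

lemma ncard_neighborSet_eq_degree (v : V) [Fintype (H.neighborSet v)] :
    (H.neighborSet v).ncard = H.degree v := by
  rw [← coe_neighborFinset, Set.ncard_coe_finset, card_neighborFinset_eq_degree]

lemma ncard_edgeSet_eq_card_edgeFinset [Fintype H.edgeSet] : H.edgeSet.ncard = #H.edgeFinset := by
  rw [← coe_edgeFinset, Set.ncard_coe_finset]

variable [Fintype V] [DecidableRel G.Adj] [DecidableRel H.Adj]

lemma card_filter_le_degree_mul_le (t : ℕ) :
    #{v | t ≤ H.degree v} * t ≤ 2 * #H.edgeFinset := calc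
  _ ≤ ∑ v ∈ {v | t ≤ H.degree v}, H.degree v :=
        card_nsmul_le_sum _ _ _ fun _ hv => (mem_filter.1 hv).2
  _ ≤ ∑ v, H.degree v := sum_le_sum_of_subset (subset_univ _)
  _ = 2 * #H.edgeFinset := H.sum_degrees_eq_twice_card_edges

omit [DecidableRel H.Adj] in
lemma two_mul_card_edgeFinset_le_card_mul_maxDegree :
    2 * #G.edgeFinset ≤ Fintype.card V * G.maxDegree := calc
  _ = ∑ v, G.degree v := G.sum_degrees_eq_twice_card_edges.symm
  _ ≤ #(univ : Finset V) • G.maxDegree := sum_le_card_nsmul _ _ _ fun v _ => G.degree_le_maxDegree v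
  _ = Fintype.card V * G.maxDegree := by rw [card_univ, smul_eq_mul]

variable [DecidableEq V]

lemma incidenceFinset_subset_of_le (hHG : H ≤ G) (v : V) :
    H.incidenceFinset v ⊆ G.incidenceFinset v := fun e => by
  simp only [mem_incidenceFinset]
  exact fun he => ⟨edgeSet_mono hHG he.1, he.2⟩

lemma card_incidenceFinset_sdiff_of_le (hHG : H ≤ G) (v : V) :
    #(G.incidenceFinset v \ H.incidenceFinset v) = G.degree v - H.degree v := by
  rw [card_sdiff_of_subset (incidenceFinset_subset_of_le hHG v), card_incidenceFinset_eq_degree,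
    card_incidenceFinset_eq_degree]

theorem exists_adj_not_adj_degree_lt (hHG : H ≤ G) {t : ℕ} (hlt : #H.edgeFinset < #G.edgeFinset)
    (hbound : 2 * #H.edgeFinset * G.maxDegree < #G.edgeFinset * t) :
    ∃ a b, G.Adj a b ∧ ¬ H.Adj a b ∧ H.degree a < t ∧ H.degree b < t := by
  set B : Finset V := {v | t ≤ H.degree v}
  have hblocked : #(B.biUnion fun v => G.incidenceFinset v \ H.incidenceFinset v) <
      #(G.edgeFinset \ H.edgeFinset) := calc
    _ ≤ ∑ v ∈ B, (G.degree v - H.degree v) :=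
        card_biUnion_le.trans_eq (sum_congr rfl fun v _ => card_incidenceFinset_sdiff_of_le hHG v)
    _ ≤ ∑ _v ∈ B, (G.maxDegree - t) :=
        sum_le_sum fun v hv => tsub_le_tsub (G.degree_le_maxDegree v) (mem_filter.1 hv).2
    _ = #B * (G.maxDegree - t) := by rw [sum_const, smul_eq_mul]
    _ < #G.edgeFinset - #H.edgeFinset :=
        Nat.mul_sub_lt_sub_of_mul_le (card_filter_le_degree_mul_le t) hlt hbound
    _ = #(G.edgeFinset \ H.edgeFinset) := (card_sdiff_of_subset (edgeFinset_mono hHG)).symm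
  obtain ⟨e, he, heB⟩ := exists_mem_notMem_of_card_lt_card hblocked
  induction e using Sym2.ind with | _ a b => ?_
  simp only [mem_sdiff, mem_edgeFinset, mem_edgeSet] at he
  have hunsat : ∀ v ∈ s(a, b), H.degree v < t := fun v hv => by
    by_contra! hsat
    refine heB (mem_biUnion.2 ⟨v, mem_filter.2 ⟨mem_univ v, hsat⟩, ?_⟩)
    simp only [mem_sdiff, mem_incidenceFinset, incidenceSet, Set.mem_ofPred_eq, mem_edgeSet]
    tauto
  exact ⟨a, b, he.1, he.2, hunsat a (Sym2.mem_mk_left a b), hunsat b (Sym2.mem_mk_right a b)⟩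

theorem exists_le_ncard_edgeSet_eq_ncard_neighborSet_le {k t : ℕ} (hk : k ≤ #G.edgeFinset)
    (hbound : 2 * k * G.maxDegree < #G.edgeFinset * t) :
    ∃ H ≤ G, H.edgeSet.ncard = k ∧ ∀ v, (H.neighborSet v).ncard ≤ t := by
  induction k with
  | zero => exact ⟨⊥, bot_le, by simp, by simp⟩
  | succ k ih =>
    obtain ⟨H, hHG, hcard, hdeg⟩ := ih (by omega) (lt_of_le_of_lt (by gcongr; omega) hbound)
    classical
    rw [ncard_edgeSet_eq_card_edgeFinset] at hcard
    obtain ⟨a, b, hab, hnab, ha, hb⟩ :=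
      exists_adj_not_adj_degree_lt hHG (t := t) (by omega) (lt_of_le_of_lt (by gcongr; omega) hbound)
    refine ⟨H ⊔ edge a b, sup_le hHG ((edge_le_iff G).2 (.inr hab)), ?_, fun v => ?_⟩
    · rw [ncard_edgeSet_eq_card_edgeFinset, card_edgeFinset_sup_edge H hnab hab.ne, hcard]
    by_cases hv : v = a ∨ v = b
    · refine (ncard_neighborSet_sup_edge_le a b v).trans ?_
      rw [ncard_neighborSet_eq_degree]
      rcases hv with rfl | rfl <;> omega
    · obtain ⟨hva, hvb⟩ := not_or.1 hv
      rw [neighborSet_sup_edge_of_ne hva hvb]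
      exact hdeg v

end SimpleGraph

/-- Let `G` be a graph with `n` vertices, `m` edges, and maximum degree `Δ(G)`, and let
`k ≤ m`.  There exists a subgraph `G'` of `G` (same vertex set, a subset of the edges)
with exactly `k` edges and maximum degree `Δ(G') ≤ (2k + 4n)·Δ(G)/m`. -/
theorem sparsify_exists {V : Type*} [Fintype V] [DecidableEq V]
    (G : SimpleGraph V) [DecidableRel G.Adj] (n m : ℕ)
    (hn : Fintype.card V = n) (hm : G.edgeFinset.card = m)
    (k : ℕ) (hk : k ≤ m) :
    ∃ G' : SimpleGraph V, G' ≤ G ∧ G'.edgeSet.ncard = k ∧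
      ∀ v : V, ((G'.neighborSet v).ncard : ℝ) ≤
        (2 * k + 4 * n) * G.maxDegree / m := by
  subst hm hn
  obtain hm0 | hm0 := Nat.eq_zero_or_pos #G.edgeFinset
  · obtain rfl : k = 0 := by omega
    exact ⟨⊥, bot_le, by simp, fun v => by simp [hm0]⟩
  set Δ := G.maxDegree
  obtain ⟨H, hHG, hcard, hdeg⟩ :=
    SimpleGraph.exists_le_ncard_edgeSet_eq_ncard_neighborSet_le
      (t := 2 * k * Δ / #G.edgeFinset + 1) hk (Nat.lt_mul_div_succ _ hm0)
  refine ⟨H, hHG, hcard, fun v => (Nat.cast_le.2 (hdeg v)).trans ?_⟩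
  have hmΔ : #G.edgeFinset ≤ 4 * Fintype.card V * Δ := by
    linarith [G.two_mul_card_edgeFinset_le_card_mul_maxDegree]
  calc ((2 * k * Δ / #G.edgeFinset + 1 : ℕ) : ℝ)
      ≤ ((2 * k * Δ : ℕ) + (4 * Fintype.card V * Δ : ℕ)) / #G.edgeFinset :=
        Nat.cast_div_add_one_le_div hm0 hmΔ
    _ = (2 * k + 4 * Fintype.card V) * Δ / #G.edgeFinset := by push_cast; ring
end
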